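/- arXiv:2009.05020 — 6 statements merged into one kernel-verified Lean document; each statement's English description precedes it below -/
import Mathlib

section
/- Let u, v : ℤ → ℂ be finitely supported sequences and p a polynomial of degree m. Then p*u = p*v (as polynomials) if and only if û^{(j)}(0) = v̂^{(j)}(0) for all j = 0, 1, …, m, where û(ξ) := ∑_{k∈ℤ} u(k) e^{-ikξ}. -/
open Complex Polynomial

/-- Symbol (Fourier series) of a sequence `u : ℤ → ℂ`. -/
noncomputable def symb (u : ℤ → ℂ) (ξ : ℂ) : ℂ :=
  ∑ᶠ k : ℤ, u k * Complex.exp (-Complex.I * k * ξ)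

/-- Convolution of a polynomial with a finitely supported sequence, as a polynomial. -/
noncomputable def pconv (q : Polynomial ℂ) (u : ℤ → ℂ) : Polynomial ℂ :=
  ∑ᶠ k : ℤ, u k • (q.comp (Polynomial.X - Polynomial.C (k : ℂ)))

/-!
Taylor's formula gives `p(x - k) = ∑_{j ≤ m} (-k)ʲ (D⁽ʲ⁾p)(x)` with the Hasse
derivatives `D⁽ʲ⁾p = p⁽ʲ⁾ / j!`, so `p * u = ∑_{j ≤ m} μⱼ(u) • D⁽ʲ⁾p` with the moments
`μⱼ(u) = ∑ₖ u(k) (-k)ʲ`, while `û⁽ʲ⁾(0) = iʲ μⱼ(u)`. Since `D⁽ʲ⁾p` has degree exactly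
`m - j`, the family `(D⁽ʲ⁾p)_{j ≤ m}` is linearly independent, so `p * u = p * v` iff the
first `m + 1` moments agree.
-/

namespace Polynomial

variable {R : Type*} [CommRing R] [IsDomain R]

theorem comp_X_sub_C_eq_sum_hasseDeriv [Infinite R] (p : R[X]) (r : R) :
    p.comp (X - C r) = ∑ j ∈ Finset.range (p.natDegree + 1), (-r) ^ j • hasseDeriv j p := by
  refine Polynomial.funext fun x => ?_
  have hexpand : (taylor x p).eval (-r) =
      ∑ j ∈ Finset.range (p.natDegree + 1), (taylor x p).coeff j * (-r) ^ j :=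
    eval_eq_sum_range' (by rw [natDegree_taylor]; omega) _
  simp only [taylor_coeff] at hexpand
  simp only [taylor_apply, eval_comp, eval_add, eval_X, eval_C] at hexpand
  simp only [eval_comp, eval_sub, eval_X, eval_C, eval_finsetSum, eval_smul, smul_eq_mul]
  rw [sub_eq_neg_add, hexpand]
  exact Finset.sum_congr rfl fun j _ => mul_comm _ _

variable [CharZero R]

theorem eq_zero_of_sum_smul_hasseDeriv_eq_zero {p : R[X]} (hp : p ≠ 0) {c : ℕ → R}
    (h : ∑ j ∈ Finset.range (p.natDegree + 1), c j • hasseDeriv j p = 0) :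
    ∀ i ≤ p.natDegree, c i = 0 := by
  intro i
  induction i using Nat.strong_induction_on with
  | _ i ih =>
    intro hi
    -- The coefficient of `X ^ (natDegree p - i)` sees only the terms with `j ≤ i`,
    -- and those with `j < i` vanish by induction.
    have hcoeff := congrArg (coeff · (p.natDegree - i)) h
    simp only [finsetSum_coeff, coeff_smul, coeff_zero, hasseDeriv_coeff, smul_eq_mul] at hcoeff
    rw [Finset.sum_eq_single i, Nat.sub_add_cancel hi] at hcoeff
    · have hchoose : (p.natDegree.choose i : R) ≠ 0 :=
        Nat.cast_ne_zero.mpr (Nat.choose_pos hi).ne'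
      simpa [hchoose, hp] using hcoeff
    · intro j _ hji
      rcases lt_or_gt_of_ne hji with hlt | hgt
      · rw [ih j hlt (by omega), zero_mul]
      · rw [coeff_eq_zero_of_natDegree_lt (by omega), mul_zero, mul_zero]
    · intro hi'
      exact absurd (Finset.mem_range.mpr (by omega)) hi'

theorem sum_smul_hasseDeriv_eq_iff {p : R[X]} (hp : p ≠ 0) {c d : ℕ → R} :
    ∑ j ∈ Finset.range (p.natDegree + 1), c j • hasseDeriv j p =
        ∑ j ∈ Finset.range (p.natDegree + 1), d j • hasseDeriv j p ↔
      ∀ j ≤ p.natDegree, c j = d j := by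
  refine ⟨fun h j hj => sub_eq_zero.mp ?_, fun h => ?_⟩
  · refine eq_zero_of_sum_smul_hasseDeriv_eq_zero hp (c := fun j => c j - d j) ?_ j hj
    simp only [sub_smul, Finset.sum_sub_distrib, h, sub_self]
  · exact Finset.sum_congr rfl fun j hj =>
      by rw [h j (Nat.lt_succ_iff.mp (Finset.mem_range.mp hj))]

end Polynomial

section

variable {w : ℤ → ℂ} {s : Finset ℤ}

theorem symb_eq_sum (hw : Function.support w ⊆ s) :
    symb w = fun ξ => ∑ k ∈ s, w k * exp (-I * k * ξ) :=
  funext fun _ =>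
    finsum_eq_sum_of_support_subset _ ((Function.support_mul_subset_left _ _).trans hw)

theorem pconv_eq_sum (q : ℂ[X]) (hw : Function.support w ⊆ s) :
    pconv q w = ∑ k ∈ s, w k • q.comp (X - C (k : ℂ)) :=
  finsum_eq_sum_of_support_subset _ ((Function.support_smul_subset_left _ _).trans hw)

theorem iteratedDeriv_symb_zero (hw : Function.support w ⊆ s) (j : ℕ) :
    iteratedDeriv j (symb w) 0 = I ^ j * ∑ k ∈ s, w k * (-(k : ℂ)) ^ j := by
  rw [symb_eq_sum hw, iteratedDeriv_fun_sum fun k _ => by fun_prop, Finset.mul_sum]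
  refine Finset.sum_congr rfl fun k _ => ?_
  rw [iteratedDeriv_const_mul_field, iteratedDeriv_cexp_const_mul]
  simp only [mul_zero, exp_zero, mul_one]
  ring

theorem pconv_eq_sum_smul_hasseDeriv (p : ℂ[X]) (hw : Function.support w ⊆ s) :
    pconv p w = ∑ j ∈ Finset.range (p.natDegree + 1),
      (∑ k ∈ s, w k * (-(k : ℂ)) ^ j) • hasseDeriv j p := by
  simp only [pconv_eq_sum p hw, comp_X_sub_C_eq_sum_hasseDeriv, Finset.smul_sum, smul_smul,
    Finset.sum_smul]
  exact Finset.sum_comm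

end

/-- `p*u = p*v` iff the symbols of `u` and `v` agree to order `m` at `0`. -/
theorem stmt2 (u v : ℤ → ℂ) (hu : (Function.support u).Finite)
    (hv : (Function.support v).Finite) (m : ℕ) (p : Polynomial ℂ) (hp : p.degree = m) :
    pconv p u = pconv p v ↔
      ∀ j ≤ m, iteratedDeriv j (symb u) 0 = iteratedDeriv j (symb v) 0 := by
  have hp0 : p ≠ 0 := fun h => by simp [h] at hp
  obtain rfl : p.natDegree = m := natDegree_eq_of_degree_eq_some hp
  set s := hu.toFinset ∪ hv.toFinset
  have hus : Function.support u ⊆ s := by simp [s]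
  have hvs : Function.support v ⊆ s := by simp [s]
  rw [pconv_eq_sum_smul_hasseDeriv p hus, pconv_eq_sum_smul_hasseDeriv p hvs,
    sum_smul_hasseDeriv_eq_iff hp0]
  refine forall₂_congr fun j _ => ?_
  rw [iteratedDeriv_symb_zero hus, iteratedDeriv_symb_zero hvs,
    mul_right_inj' (pow_ne_zero j I_ne_zero)]
end

section
/- Let v : ℤ → ℂ^{1×r} be finitely supported and set p⃗ := ((·)^m/m!) * v. Then for each j = 0, …, m, the linear span of {p⃗^{(j)}, p⃗^{(j+1)}, …, p⃗^{(m)}} equals P_{m−j, v} := { q*v : q a polynomial of degree ≤ m−j }, where (q*v)(x) := ∑_{k∈ℤ} q(x−k)v(k). -/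
open Complex Polynomial

namespace Stmt4Aux

lemma support_subset (q : Polynomial ℂ) (u : ℤ → ℂ) :
    (Function.support fun k : ℤ => u k • q.comp (X - C (k : ℂ))) ⊆ Function.support u := by
  intro k hk
  simp only [Function.mem_support, ne_eq] at hk ⊢
  intro h; apply hk; rw [h, zero_smul]

lemma pconv_add {u : ℤ → ℂ} (hu : (Function.support u).Finite) (q₁ q₂ : Polynomial ℂ) :
    pconv (q₁ + q₂) u = pconv q₁ u + pconv q₂ u := by
  unfold pconv
  rw [← finsum_add_distrib (hu.subset (support_subset q₁ u)) (hu.subset (support_subset q₂ u))]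
  congr 1; funext k; rw [add_comp, smul_add]

lemma pconv_smul {u : ℤ → ℂ} (hu : (Function.support u).Finite) (c : ℂ) (q : Polynomial ℂ) :
    pconv (c • q) u = c • pconv q u := by
  unfold pconv
  rw [smul_finsum' c (hu.subset (support_subset q u))]
  congr 1; funext k
  rw [smul_comp, smul_comm]

lemma derivative_pconv {u : ℤ → ℂ} (hu : (Function.support u).Finite) (q : Polynomial ℂ) :
    derivative (pconv q u) = pconv (derivative q) u := by
  unfold pconv
  have h := (Polynomial.derivative (R := ℂ)).toAddMonoidHom.map_finsum
    (f := fun k : ℤ => u k • q.comp (X - C (k : ℂ))) (hu.subset (support_subset q u))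
  simp only [LinearMap.toAddMonoidHom_coe] at h
  rw [h]
  congr 1; funext k
  rw [derivative_smul, derivative_comp, derivative_sub,
    derivative_X, derivative_C, sub_zero, one_mul]

lemma iterate_derivative_pconv {u : ℤ → ℂ} (hu : (Function.support u).Finite)
    (i : ℕ) (q : Polynomial ℂ) :
    derivative^[i] (pconv q u) = pconv (derivative^[i] q) u := by
  induction i generalizing q with
  | zero => simp
  | succ n ih =>
    rw [Function.iterate_succ_apply, derivative_pconv hu, ih, Function.iterate_succ_apply]

end Stmt4Aux

open Stmt4Aux in
/-- for `p⃗ := ((·)^m/m!) * v`,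
`span{p⃗^{(j)},…,p⃗^{(m)}} = P_{m−j,v}` for each `j = 0,…,m`. -/
theorem stmt4 (r : ℕ) (v : ℤ → Fin r → ℂ) (hv : (Function.support v).Finite) (m : ℕ) :
    ∀ j ≤ m,
      (Submodule.span ℂ
        {w : Fin r → Polynomial ℂ | ∃ i, j ≤ i ∧ i ≤ m ∧
          w = fun ℓ => Polynomial.derivative^[i]
            (pconv (Polynomial.C ((Nat.factorial m : ℂ))⁻¹ * Polynomial.X ^ m)
              (fun k => v k ℓ))} : Set (Fin r → Polynomial ℂ)) =
      {w : Fin r → Polynomial ℂ | ∃ q : Polynomial ℂ, q.natDegree ≤ m - j ∧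
        w = fun ℓ => pconv q (fun k => v k ℓ)} := by
  intro j hj
  have hu : ∀ ℓ : Fin r, (Function.support fun k => v k ℓ).Finite := by
    intro ℓ
    refine hv.subset fun k hk => ?_
    simp only [Function.mem_support] at hk ⊢
    intro h; apply hk; rw [h]; rfl
  -- the convolution map as a linear map
  let T : Polynomial ℂ →ₗ[ℂ] (Fin r → Polynomial ℂ) :=
    { toFun := fun q ℓ => pconv q (fun k => v k ℓ)
      map_add' := fun q₁ q₂ => funext fun ℓ => pconv_add (hu ℓ) q₁ q₂
      map_smul' := fun c q => funext fun ℓ => pconv_smul (hu ℓ) c q }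
  set c : ℕ → ℂ := fun i => ((Nat.factorial m : ℂ))⁻¹ * (Nat.descFactorial m i : ℂ) with hc
  have hcne : ∀ i ≤ m, c i ≠ 0 := by
    intro i him
    apply mul_ne_zero
    · exact inv_ne_zero (by exact_mod_cast Nat.factorial_ne_zero m)
    · exact_mod_cast fun h => Nat.lt_irrefl i (him.trans_lt (Nat.descFactorial_eq_zero_iff_lt.mp h))
  have hder : ∀ i : ℕ, derivative^[i] (C ((Nat.factorial m : ℂ))⁻¹ * X ^ m)
      = c i • X ^ (m - i) := by
    intro i
    rw [iterate_derivative_C_mul, iterate_derivative_X_pow_eq_C_mul, ← mul_assoc, ← C_mul,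
      ← smul_eq_C_mul]
  have hkey : ∀ i : ℕ, (fun ℓ => derivative^[i]
      (pconv (C ((Nat.factorial m : ℂ))⁻¹ * X ^ m) (fun k => v k ℓ))) = T (c i • X ^ (m - i)) := by
    intro i
    funext ℓ
    show _ = pconv (c i • X ^ (m - i)) (fun k => v k ℓ)
    rw [iterate_derivative_pconv (hu ℓ), hder i]
  have key : Submodule.span ℂ
      {w : Fin r → Polynomial ℂ | ∃ i, j ≤ i ∧ i ≤ m ∧
        w = fun ℓ => Polynomial.derivative^[i]
          (pconv (Polynomial.C ((Nat.factorial m : ℂ))⁻¹ * Polynomial.X ^ m)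
            (fun k => v k ℓ))}
      = Submodule.map T (Polynomial.degreeLE ℂ ((m - j : ℕ) : WithBot ℕ)) := by
    apply le_antisymm
    · rw [Submodule.span_le]
      rintro w ⟨i, hji, him, rfl⟩
      rw [hkey i]
      refine ⟨c i • X ^ (m - i), ?_, rfl⟩
      rw [SetLike.mem_coe, Polynomial.mem_degreeLE]
      refine (degree_smul_le _ _).trans ?_
      rw [degree_X_pow]
      exact_mod_cast Nat.sub_le_sub_left hji m
    · classical
      rw [Polynomial.degreeLE_eq_span_X_pow, Submodule.map_span, Submodule.span_le]
      rintro w ⟨p, hp, rfl⟩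
      simp only [Finset.coe_image, Set.mem_image, Finset.mem_coe, Finset.mem_range] at hp
      obtain ⟨d, hd, rfl⟩ := hp
      have hd' : d ≤ m - j := Nat.lt_succ_iff.mp hd
      set i := m - d with hi
      have hji : j ≤ i := by omega
      have him : i ≤ m := by omega
      have hmi : m - i = d := by omega
      have hmem : T (c i • X ^ (m - i)) ∈ Submodule.span ℂ
          {w : Fin r → Polynomial ℂ | ∃ i', j ≤ i' ∧ i' ≤ m ∧
            w = fun ℓ => Polynomial.derivative^[i']
              (pconv (Polynomial.C ((Nat.factorial m : ℂ))⁻¹ * Polynomial.X ^ m)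
                (fun k => v k ℓ))} :=
        Submodule.subset_span ⟨i, hji, him, (hkey i).symm⟩
      have : T (X ^ d) = (c i)⁻¹ • T (c i • X ^ (m - i)) := by
        rw [map_smul, smul_smul, inv_mul_cancel₀ (hcne i him), one_smul, hmi]
      rw [this]
      exact Submodule.smul_mem _ _ hmem
  rw [key]
  ext w
  simp only [SetLike.mem_coe, Submodule.mem_map, Set.mem_setOf_eq]
  constructor
  · rintro ⟨q, hq, rfl⟩
    exact ⟨q, Polynomial.natDegree_le_iff_degree_le.mpr (Polynomial.mem_degreeLE.mp hq), rfl⟩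
  · rintro ⟨q, hq, rfl⟩
    exact ⟨q, Polynomial.mem_degreeLE.mpr (Polynomial.natDegree_le_iff_degree_le.mp hq), rfl⟩
end

section
/- Let a : ℤ → ℂ^{r×r} be a finitely supported mask and v : ℤ → ℂ^{1×r} finitely supported, m ∈ ℕ, p⃗ := ((·)^m/m!)*v. Then S_a p⃗ is a vector polynomial of degree ≤ m if and only if v̂(2ξ) â(ξ+π) = O(|ξ|^{m+1}) as ξ → 0, which in turn holds if and only if for the coset sequences a^{[0]}(k) := a(2k) and a^{[1]}(k) := a(1+2k) one has v̂(ξ) \widehat{a^{[1]}}(ξ) e^{-iξ/2} = v̂(ξ) \widehat{a^{[0]}}(ξ) + O(|ξ|^{m+1}) as ξ → 0. -/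
/-!
Write `R'` for the polynomial `∑_{i,n,k} (-1)^k v(n)_i a(k)_{iℓ} (X - 2n - k)^m`; all three
conditions say `R' = 0`. Expanding the definitions,
`(S_a p⃗)(x)_ℓ = (2^m m!)⁻¹ (R(x) + (-1)^x R'(x))` with `R` the same sum without the signs, and a
function of this shape on `ℤ` is a polynomial of degree `≤ m` iff `R' = 0` (compare even and odd
`x`). Next, `v̂(2ξ) â(ξ+π)` is the exponential sum `∑ (-1)^k v(n)_i a(k)_{iℓ} e^{-i(2n+k)ξ}`, so its
derivatives of order `≤ m` at `0` are, up to nonzero factors, the moments of these weights at the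
nodes `2n + k`, and these moments vanish iff `R' = 0`. Finally
`â(ξ+π) = â^{[0]}(2ξ) - â^{[1]}(2ξ) e^{-iξ}` gives `v̂(2ξ) â(ξ+π) = -G(2ξ)` for
`G(ξ) = v̂(ξ) â^{[1]}(ξ) e^{-iξ/2} - v̂(ξ) â^{[0]}(ξ)`.
-/

open Complex Polynomial

/-- Entrywise symbol of a matrix-valued sequence. -/
noncomputable def symbM {r : ℕ} (a : ℤ → Fin r → Fin r → ℂ) (i ℓ : Fin r) (ξ : ℂ) : ℂ :=
  ∑ᶠ k : ℤ, a k i ℓ * Complex.exp (-Complex.I * k * ξ)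

/-- Vector subdivision operator on row-vector sequences. -/
noncomputable def sd {r : ℕ} (a : ℤ → Fin r → Fin r → ℂ) (w : ℤ → Fin r → ℂ) :
    ℤ → Fin r → ℂ :=
  fun j ℓ => 2 * ∑ᶠ k : ℤ, ∑ i : Fin r, w k i * a (j - 2 * k) i ℓ

open scoped Real Nat

theorem Function.support_apply_subset {α β M : Type*} [Zero M] (f : α → β → M) (b : β) :
    Function.support (fun a => f a b) ⊆ Function.support f := fun _ ha h => ha (congrFun h b)

theorem neg_one_zpow_sub {K : Type*} [DivisionRing K] (x k : ℤ) :
    (-1 : K) ^ (x - k) = (-1) ^ x * (-1) ^ k := by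
  rw [zpow_sub₀ (neg_ne_zero.2 one_ne_zero)]
  rcases Int.even_or_odd k with hk | hk <;> simp [hk.neg_one_zpow, div_neg]

theorem finsum_eq_finsum_two_mul_add_finsum_one_add_two_mul {M : Type*} [AddCommMonoid M]
    {f : ℤ → M} (hf : (Function.support f).Finite) :
    ∑ᶠ k, f k = ∑ᶠ k, f (2 * k) + ∑ᶠ k, f (1 + 2 * k) := by
  have hcover : Set.range (2 * ·) ∪ Set.range (1 + 2 * ·) = (Set.univ : Set ℤ) := by
    refine Set.eq_univ_of_forall fun k => ?_
    rcases Int.even_or_odd' k with ⟨t, rfl | rfl⟩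
    · exact Or.inl ⟨t, rfl⟩
    · exact Or.inr ⟨t, add_comm _ _⟩
  have hdisj : Disjoint (Set.range (2 * ·)) (Set.range (1 + 2 * · : ℤ → ℤ)) := by
    refine Set.disjoint_left.2 ?_
    rintro _ ⟨s, rfl⟩ ⟨t, hst⟩
    simp only at hst
    omega
  rw [← finsum_mem_range (f := f) (g := (2 * ·)) fun s t h => by simpa using h,
    ← finsum_mem_range (f := f) (g := (1 + 2 * ·)) fun s t h => by simpa using h,
    ← finsum_mem_union' hdisj (hf.subset Set.inter_subset_right)
      (hf.subset Set.inter_subset_right), hcover, finsum_mem_univ]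

-- `(1 + (-1)^(x-k)) / 2` is the indicator of `k ≡ x (mod 2)`.
theorem finsum_comp_sub_two_mul (f : ℤ → ℂ) (x : ℤ) :
    ∑ᶠ k, f (x - 2 * k) = ∑ᶠ k, (1 + (-1) ^ (x - k)) / 2 * f k := by
  rw [← finsum_mem_range (f := f) (g := (x - 2 * ·)) fun s t h => by simpa using h,
    finsum_mem_def]
  refine finsum_congr fun k => ?_
  rcases Int.even_or_odd (x - k) with hk | hk
  · have hmem : k ∈ Set.range (x - 2 * ·) := by
      obtain ⟨t, ht⟩ := hk
      exact ⟨t, show x - 2 * t = k by omega⟩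
    simp only [Set.indicator_of_mem hmem, hk.neg_one_zpow]
    ring
  · have hmem : k ∉ Set.range (x - 2 * ·) := by
      rintro ⟨t, rfl⟩
      exact Int.not_odd_iff_even.2 ⟨t, by ring⟩ hk
    simp [Set.indicator_of_notMem hmem, hk.neg_one_zpow]

theorem Polynomial.coeff_sum_smul_X_sub_C_pow {R ι : Type*} [CommRing R] (T : Finset ι)
    (c μ : ι → R) (m k : ℕ) :
    (∑ t ∈ T, c t • (X - C (μ t)) ^ m).coeff k
      = (-1) ^ (m - k) * m.choose k * ∑ t ∈ T, c t * μ t ^ (m - k) := by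
  rw [finsetSum_coeff, Finset.mul_sum]
  refine Finset.sum_congr rfl fun t _ => ?_
  rw [coeff_smul, sub_eq_add_neg, ← C_neg, coeff_X_add_C_pow, smul_eq_mul, neg_pow]
  ring

theorem Polynomial.sum_smul_X_sub_C_pow_eq_zero_iff {R ι : Type*} [CommRing R] [IsDomain R]
    [CharZero R] (T : Finset ι) (c μ : ι → R) (m : ℕ) :
    ∑ t ∈ T, c t • (X - C (μ t)) ^ m = 0 ↔ ∀ j ≤ m, ∑ t ∈ T, c t * μ t ^ j = 0 := by
  have hcoeff_ne : ∀ k ≤ m, (-1 : R) ^ (m - k) * m.choose k ≠ 0 := fun k hk =>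
    mul_ne_zero (pow_ne_zero _ (neg_ne_zero.2 one_ne_zero))
      (Nat.cast_ne_zero.2 (Nat.choose_pos hk).ne')
  constructor
  · intro h j hj
    have hcoeff := congrArg (coeff · (m - j)) h
    simp only [coeff_sum_smul_X_sub_C_pow, coeff_zero] at hcoeff
    simpa [Nat.sub_sub_self hj] using
      (mul_eq_zero.1 hcoeff).resolve_left (hcoeff_ne _ (Nat.sub_le m j))
  · intro h
    ext k
    rw [coeff_sum_smul_X_sub_C_pow, coeff_zero]
    rcases le_or_gt k m with hk | hk
    · rw [h _ (Nat.sub_le m k), mul_zero]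
    · simp [Nat.choose_eq_zero_of_lt hk]

theorem Polynomial.eq_of_eval_two_mul_add_eq {K : Type*} [Field K] [CharZero K] {p q : K[X]}
    (e : ℤ) (h : ∀ t : ℤ, p.eval ((2 * t + e : ℤ) : K) = q.eval ((2 * t + e : ℤ) : K)) :
    p = q := by
  refine eq_of_infinite_eval_eq p q (Set.Infinite.mono ?_ (Set.infinite_range_of_injective
    (f := fun t : ℤ => ((2 * t + e : ℤ) : K)) fun s t hst => by simpa using hst))
  rintro _ ⟨t, rfl⟩
  exact h t

theorem Polynomial.exists_eval_eq_eval_add_neg_one_zpow_mul_eval_iff {K : Type*} [Field K]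
    [CharZero K] {m : ℕ} {R R' : K[X]} (hR : R.natDegree ≤ m) :
    (∃ Q : K[X], Q.natDegree ≤ m ∧
        ∀ x : ℤ, R.eval (x : K) + (-1) ^ x * R'.eval (x : K) = Q.eval (x : K)) ↔ R' = 0 := by
  constructor
  · rintro ⟨Q, -, hQ⟩
    have heven : R + R' = Q := eq_of_eval_two_mul_add_eq 0 fun t => by
      simpa [Even.neg_one_zpow ⟨t, two_mul t⟩] using hQ (2 * t + 0)
    have hodd : R - R' = Q := eq_of_eval_two_mul_add_eq 1 fun t => by
      simpa [Odd.neg_one_zpow ⟨t, rfl⟩, sub_eq_add_neg] using hQ (2 * t + 1)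
    have : (2 : K[X]) * R' = 0 := by linear_combination heven - hodd
    simpa using this
  · rintro rfl
    exact ⟨R, hR, fun x => by simp⟩

theorem iteratedDeriv_sum_mul_cexp {ι : Type*} (T : Finset ι) (c μ : ι → ℂ) (j : ℕ) (x : ℂ) :
    iteratedDeriv j (fun ξ => ∑ t ∈ T, c t * cexp (μ t * ξ)) x
      = ∑ t ∈ T, c t * μ t ^ j * cexp (μ t * x) := by
  rw [iteratedDeriv_fun_sum fun t _ => by fun_prop]
  simp [mul_assoc]

theorem forall_iteratedDeriv_sum_mul_cexp_eq_zero_iff {ι : Type*} (T : Finset ι) (c μ : ι → ℂ)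
    (m : ℕ) :
    (∀ j ≤ m, iteratedDeriv j (fun ξ => ∑ t ∈ T, c t * cexp (-I * μ t * ξ)) 0 = 0) ↔
      ∑ t ∈ T, c t • (X - C (μ t)) ^ m = 0 := by
  have h : ∀ j, iteratedDeriv j (fun ξ => ∑ t ∈ T, c t * cexp (-I * μ t * ξ)) 0
      = (-I) ^ j * ∑ t ∈ T, c t * μ t ^ j := by
    intro j
    rw [iteratedDeriv_sum_mul_cexp, Finset.mul_sum]
    exact Finset.sum_congr rfl fun t _ => by simp only [mul_zero, exp_zero]; ring
  simp only [h, mul_eq_zero, pow_eq_zero_iff', neg_eq_zero, I_ne_zero, false_and, false_or,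
    sum_smul_X_sub_C_pow_eq_zero_iff]

theorem symbM_eq_symb {r : ℕ} (a : ℤ → Fin r → Fin r → ℂ) (i ℓ : Fin r) :
    symbM a i ℓ = symb (fun k => a k i ℓ) := rfl

theorem symb_eq_sum_s6 {u : ℤ → ℂ} {S : Finset ℤ} (hu : Function.support u ⊆ S) (ξ : ℂ) :
    symb u ξ = ∑ k ∈ S, u k * cexp (-I * k * ξ) :=
  finsum_eq_sum_of_support_subset _ ((Function.support_mul_subset_left _ _).trans hu)

theorem contDiff_symb {u : ℤ → ℂ} (hu : (Function.support u).Finite) {n : WithTop ℕ∞} :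
    ContDiff ℂ n (symb u) := by
  have : symb u = fun ξ => ∑ k ∈ hu.toFinset, u k * cexp (-I * k * ξ) :=
    funext (symb_eq_sum_s6 hu.coe_toFinset.symm.subset)
  rw [this]
  fun_prop

theorem symb_add_two_pi (u : ℤ → ℂ) (ξ : ℂ) : symb u (ξ + 2 * π) = symb u ξ := by
  refine finsum_congr fun k => ?_
  rw [show -I * k * (ξ + 2 * π) = -I * k * ξ + (-k : ℤ) * (2 * π * I) by push_cast; ring,
    exp_add, exp_int_mul_two_pi_mul_I, mul_one]

theorem symb_eq_symb_two_mul_add {u : ℤ → ℂ} (hu : (Function.support u).Finite) (ξ : ℂ) :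
    symb u ξ = symb (fun k => u (2 * k)) (2 * ξ)
      + symb (fun k => u (1 + 2 * k)) (2 * ξ) * cexp (-I * ξ) := by
  rw [symb, finsum_eq_finsum_two_mul_add_finsum_one_add_two_mul
    (hu.subset (Function.support_mul_subset_left _ _)), symb, symb, finsum_mul]
  congr 1 <;> refine finsum_congr fun k => ?_
  · push_cast; ring_nf
  · rw [mul_assoc _ (cexp _), ← exp_add]; push_cast; ring_nf

theorem symb_add_pi {u : ℤ → ℂ} (hu : (Function.support u).Finite) (ξ : ℂ) :
    symb u (ξ + π) = symb (fun k => u (2 * k)) (2 * ξ)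
      - symb (fun k => u (1 + 2 * k)) (2 * ξ) * cexp (-I * ξ) := by
  rw [symb_eq_symb_two_mul_add hu, mul_add, symb_add_two_pi, symb_add_two_pi,
    show -I * (ξ + π) = -I * ξ + -(π * I) by ring, exp_add, exp_neg, exp_pi_mul_I]
  ring

theorem symb_two_mul_mul_symb_add_pi {u w : ℤ → ℂ} {S T : Finset ℤ}
    (hu : Function.support u ⊆ S) (hw : Function.support w ⊆ T) (ξ : ℂ) :
    symb u (2 * ξ) * symb w (ξ + π)
      = ∑ n ∈ S, ∑ k ∈ T, (-1) ^ k * (u n * w k) * cexp (-I * (2 * n + k) * ξ) := by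
  rw [symb_eq_sum_s6 hu, symb_eq_sum_s6 hw, Finset.sum_mul_sum]
  refine Finset.sum_congr rfl fun n _ => Finset.sum_congr rfl fun k _ => ?_
  rw [show -I * k * (ξ + π) = -I * k * ξ + k * -(π * I) by ring, exp_add, exp_int_mul, exp_neg,
    exp_pi_mul_I, show -I * (2 * n + k) * ξ = -I * n * (2 * ξ) + -I * k * ξ by ring, exp_add]
  simp only [inv_neg, inv_one]
  ring

theorem iteratedDeriv_sum_symb_two_mul_mul_symbM_add_pi {r : ℕ} {a : ℤ → Fin r → Fin r → ℂ}
    (ha : (Function.support a).Finite) {v : ℤ → Fin r → ℂ} (hv : (Function.support v).Finite)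
    (ℓ : Fin r) (j : ℕ) :
    iteratedDeriv j (fun ξ => ∑ i, symb (fun k => v k i) (2 * ξ) * symbM a i ℓ (ξ + π)) 0
      = -(2 ^ j * iteratedDeriv j (fun ξ =>
          (∑ i, symb (fun k => v k i) ξ * symbM (fun k => a (1 + 2 * k)) i ℓ ξ)
              * cexp (-I * ξ / 2)
            - ∑ i, symb (fun k => v k i) ξ * symbM (fun k => a (2 * k)) i ℓ ξ) 0) := by
  set G := fun ξ => (∑ i, symb (fun k => v k i) ξ * symbM (fun k => a (1 + 2 * k)) i ℓ ξ)
      * cexp (-I * ξ / 2) - ∑ i, symb (fun k => v k i) ξ * symbM (fun k => a (2 * k)) i ℓ ξ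
  have hai : ∀ i, (Function.support fun k => a k i ℓ).Finite := fun i =>
    ha.subset ((Function.support_apply_subset _ ℓ).trans (Function.support_apply_subset a i))
  have hcoset : ∀ g : ℤ → ℤ, g.Injective → ∀ i, ContDiff ℂ j (symbM (fun k => a (g k)) i ℓ) :=
    fun g hg i => contDiff_symb ((hai i).preimage hg.injOn)
  have hv_smooth : ∀ i, ContDiff ℂ j (symb fun k => v k i) := fun i =>
    contDiff_symb (hv.subset (Function.support_apply_subset v i))
  have ha₀_smooth := hcoset (2 * ·) fun s t h => by simpa using h
  have ha₁_smooth := hcoset (1 + 2 * ·) fun s t h => by simpa using h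
  have hG : ContDiff ℂ j G := by fun_prop
  have hFG : (fun ξ => ∑ i, symb (fun k => v k i) (2 * ξ) * symbM a i ℓ (ξ + π))
      = fun ξ => -G (2 * ξ) := by
    funext ξ
    simp only [G, symbM_eq_symb, symb_add_pi (hai _), mul_sub, Finset.sum_sub_distrib,
      Finset.sum_mul, neg_sub, show -I * (2 * ξ) / 2 = -I * ξ by ring]
    exact congrArg _ (Finset.sum_congr rfl fun i _ => by ring)
  rw [hFG, iteratedDeriv_fun_neg, iteratedDeriv_comp_const_mul hG]
  simp only [mul_zero]

theorem eval_pconv (q : ℂ[X]) {u : ℤ → ℂ} {S : Finset ℤ} (hu : Function.support u ⊆ S)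
    (y : ℂ) : (pconv q u).eval y = ∑ n ∈ S, u n * q.eval (y - n) := by
  rw [pconv, finsum_eq_sum_of_support_subset (fun k => u k • q.comp (X - C (k : ℂ)))
    fun k hk => hu fun h => hk (by simp [h]), eval_finsetSum]
  simp [eval_comp]

theorem sd_pconv_monomial {r m : ℕ} {a : ℤ → Fin r → Fin r → ℂ} {v : ℤ → Fin r → ℂ}
    {Sa Sv : Finset ℤ} (ha : Function.support a ⊆ Sa) (hv : Function.support v ⊆ Sv)
    (x : ℤ) (ℓ : Fin r) :
    sd a (fun k i => (pconv (C (m ! : ℂ)⁻¹ * X ^ m) (fun n => v n i)).eval (k : ℂ)) x ℓ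
      = ((m ! : ℂ) * 2 ^ m)⁻¹ * ∑ i, ∑ n ∈ Sv, ∑ k ∈ Sa,
          (1 + (-1) ^ (x - k)) * (v n i * a k i ℓ) * (x - (2 * n + k)) ^ m := by
  set g : ℤ → ℂ := fun k => ∑ i, ∑ n ∈ Sv,
    v n i * a k i ℓ * (((m ! : ℂ) * 2 ^ m)⁻¹ * (x - (2 * n + k)) ^ m)
  have hterm : ∀ k : ℤ, ∑ i, (pconv (C (m ! : ℂ)⁻¹ * X ^ m) (fun n => v n i)).eval (k : ℂ)
      * a (x - 2 * k) i ℓ = g (x - 2 * k) := fun k => by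
    refine Finset.sum_congr rfl fun i _ => ?_
    rw [eval_pconv _ ((Function.support_apply_subset v i).trans hv), Finset.sum_mul]
    refine Finset.sum_congr rfl fun n _ => ?_
    simp only [eval_mul, eval_C, eval_pow, eval_X]
    push_cast
    rw [show (x : ℂ) - (2 * n + (x - 2 * k)) = 2 * (k - n) by ring, mul_pow]
    field_simp
  have hg : Function.support g ⊆ Sa := fun k hk => by
    by_contra hkS
    have hak : a k = 0 := Function.notMem_support.1 fun hk' => hkS (ha hk')
    exact hk (by simp [g, hak])
  rw [sd, finsum_congr hterm, finsum_comp_sub_two_mul,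
    finsum_eq_sum_of_support_subset _ ((Function.support_mul_subset_right _ _).trans hg)]
  simp only [g, Finset.mul_sum]
  rw [Finset.sum_comm]
  refine Finset.sum_congr rfl fun i _ => ?_
  rw [Finset.sum_comm]
  refine Finset.sum_congr rfl fun n _ => Finset.sum_congr rfl fun k _ => ?_
  ring

noncomputable def twoScalePowerSum {r : ℕ} (m : ℕ) (Sv Sa : Finset ℤ) (w : Fin r → ℤ → ℤ → ℂ) :
    ℂ[X] :=
  ∑ i, ∑ n ∈ Sv, ∑ k ∈ Sa, w i n k • (X - C (2 * n + k : ℂ)) ^ m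

theorem natDegree_twoScalePowerSum_le {r m : ℕ} (Sv Sa : Finset ℤ) (w : Fin r → ℤ → ℤ → ℂ) :
    (twoScalePowerSum m Sv Sa w).natDegree ≤ m :=
  natDegree_sum_le_of_forall_le _ _ fun _ _ => natDegree_sum_le_of_forall_le _ _ fun _ _ =>
    natDegree_sum_le_of_forall_le _ _ fun _ _ => (natDegree_smul_le _ _).trans
      (by rw [natDegree_pow, natDegree_X_sub_C, mul_one])

theorem eval_twoScalePowerSum {r m : ℕ} (Sv Sa : Finset ℤ) (w : Fin r → ℤ → ℤ → ℂ) (x : ℂ) :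
    (twoScalePowerSum m Sv Sa w).eval x
      = ∑ i, ∑ n ∈ Sv, ∑ k ∈ Sa, w i n k * (x - (2 * n + k)) ^ m := by
  simp [twoScalePowerSum, eval_finsetSum]

theorem sd_pconv_monomial_eq_eval {r m : ℕ} {a : ℤ → Fin r → Fin r → ℂ} {v : ℤ → Fin r → ℂ}
    {Sa Sv : Finset ℤ} (ha : Function.support a ⊆ Sa) (hv : Function.support v ⊆ Sv)
    (x : ℤ) (ℓ : Fin r) :
    sd a (fun k i => (pconv (C (m ! : ℂ)⁻¹ * X ^ m) (fun n => v n i)).eval (k : ℂ)) x ℓ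
      = (C ((m ! : ℂ) * 2 ^ m)⁻¹ * twoScalePowerSum m Sv Sa fun i n k => v n i * a k i ℓ).eval
          (x : ℂ)
        + (-1) ^ x * (C ((m ! : ℂ) * 2 ^ m)⁻¹ *
            twoScalePowerSum m Sv Sa fun i n k => (-1) ^ k * (v n i * a k i ℓ)).eval (x : ℂ) := by
  rw [sd_pconv_monomial ha hv, eval_mul, eval_C, eval_mul, eval_C, eval_twoScalePowerSum,
    eval_twoScalePowerSum]
  simp only [Finset.mul_sum, ← Finset.sum_add_distrib]
  refine Finset.sum_congr rfl fun i _ => Finset.sum_congr rfl fun n _ =>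
    Finset.sum_congr rfl fun k _ => ?_
  rw [neg_one_zpow_sub]
  ring

theorem exists_sd_pconv_monomial_eq_eval_iff {r m : ℕ} {a : ℤ → Fin r → Fin r → ℂ}
    {v : ℤ → Fin r → ℂ} {Sa Sv : Finset ℤ} (ha : Function.support a ⊆ Sa)
    (hv : Function.support v ⊆ Sv) :
    (∃ Q : Fin r → ℂ[X], (∀ ℓ, (Q ℓ).natDegree ≤ m) ∧ ∀ x : ℤ, ∀ ℓ,
        sd a (fun k i => (pconv (C (m ! : ℂ)⁻¹ * X ^ m) (fun n => v n i)).eval (k : ℂ)) x ℓ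
          = (Q ℓ).eval (x : ℂ))
      ↔ ∀ ℓ, twoScalePowerSum m Sv Sa (fun i n k => (-1) ^ k * (v n i * a k i ℓ)) = 0 := by
  have hκ : ((m ! : ℂ) * 2 ^ m)⁻¹ ≠ 0 := by simp [Nat.factorial_ne_zero]
  have key : ∀ ℓ, (∃ q : ℂ[X], q.natDegree ≤ m ∧ ∀ x : ℤ,
      sd a (fun k i => (pconv (C (m ! : ℂ)⁻¹ * X ^ m) (fun n => v n i)).eval (k : ℂ)) x ℓ
        = q.eval (x : ℂ))
      ↔ twoScalePowerSum m Sv Sa (fun i n k => (-1) ^ k * (v n i * a k i ℓ)) = 0 := fun ℓ => by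
    simp only [sd_pconv_monomial_eq_eval ha hv]
    rw [exists_eval_eq_eval_add_neg_one_zpow_mul_eval_iff
      ((natDegree_C_mul_le _ _).trans (natDegree_twoScalePowerSum_le _ _ _)), mul_eq_zero,
      C_eq_zero, or_iff_right hκ]
  rw [← forall_congr' key, Classical.skolem]
  simp only [forall_and]
  exact exists_congr fun Q => and_congr_right fun _ => forall_comm

theorem forall_iteratedDeriv_sum_symb_two_mul_mul_symbM_add_pi_eq_zero_iff {r m : ℕ}
    {a : ℤ → Fin r → Fin r → ℂ} {v : ℤ → Fin r → ℂ} {Sa Sv : Finset ℤ}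
    (ha : Function.support a ⊆ Sa) (hv : Function.support v ⊆ Sv) :
    (∀ j ≤ m, ∀ ℓ,
        iteratedDeriv j (fun ξ => ∑ i, symb (fun k => v k i) (2 * ξ) * symbM a i ℓ (ξ + π)) 0 = 0)
      ↔ ∀ ℓ, twoScalePowerSum m Sv Sa (fun i n k => (-1) ^ k * (v n i * a k i ℓ)) = 0 := by
  have key : ∀ ℓ, (∀ j ≤ m,
      iteratedDeriv j (fun ξ => ∑ i, symb (fun k => v k i) (2 * ξ) * symbM a i ℓ (ξ + π)) 0 = 0)
        ↔ twoScalePowerSum m Sv Sa (fun i n k => (-1) ^ k * (v n i * a k i ℓ)) = 0 := fun ℓ => by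
    simp only [symbM_eq_symb, symb_two_mul_mul_symb_add_pi
      ((Function.support_apply_subset v _).trans hv)
      (((Function.support_apply_subset _ ℓ).trans (Function.support_apply_subset a _)).trans ha)]
    simpa only [twoScalePowerSum, Finset.sum_product] using
      forall_iteratedDeriv_sum_mul_cexp_eq_zero_iff (Finset.univ ×ˢ Sv ×ˢ Sa)
        (fun t => (-1) ^ t.2.2 * (v t.2.1 t.1 * a t.2.2 t.1 ℓ)) (fun t => 2 * t.2.1 + t.2.2) m
  exact ⟨fun h ℓ => (key ℓ).1 fun j hj => h j hj ℓ, fun h j hj ℓ => (key ℓ).2 (h ℓ) j hj⟩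

/-- `S_a p⃗` is a vector polynomial of degree ≤ m iff
`v̂(2ξ)â(ξ+π) = O(|ξ|^{m+1})` iff the coset condition
`v̂(ξ)â^{[1]}(ξ)e^{-iξ/2} = v̂(ξ)â^{[0]}(ξ) + O(|ξ|^{m+1})` holds. -/
theorem stmt6 (r m : ℕ) (a : ℤ → Fin r → Fin r → ℂ)
    (ha : (Function.support a).Finite)
    (v : ℤ → Fin r → ℂ) (hv : (Function.support v).Finite)
    (P : Fin r → Polynomial ℂ)
    (hPdef : ∀ ℓ, P ℓ = pconv (Polynomial.C ((Nat.factorial m : ℂ))⁻¹ * Polynomial.X ^ m)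
      (fun k => v k ℓ)) :
    ((∃ Q : Fin r → Polynomial ℂ, (∀ ℓ, (Q ℓ).natDegree ≤ m) ∧
        ∀ x : ℤ, ∀ ℓ, sd a (fun k i => (P i).eval ((k : ℂ))) x ℓ = (Q ℓ).eval ((x : ℂ))) ↔
      (∀ j ≤ m, ∀ ℓ : Fin r,
        iteratedDeriv j
          (fun ξ : ℂ => ∑ i : Fin r, symb (fun k => v k i) (2 * ξ) *
            symbM a i ℓ (ξ + (Real.pi : ℂ))) 0 = 0)) ∧
    ((∀ j ≤ m, ∀ ℓ : Fin r,
        iteratedDeriv j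
          (fun ξ : ℂ => ∑ i : Fin r, symb (fun k => v k i) (2 * ξ) *
            symbM a i ℓ (ξ + (Real.pi : ℂ))) 0 = 0) ↔
      (∀ j ≤ m, ∀ ℓ : Fin r,
        iteratedDeriv j
          (fun ξ : ℂ =>
            (∑ i : Fin r, symb (fun k => v k i) ξ *
              symbM (fun k => a (1 + 2 * k)) i ℓ ξ) * Complex.exp (-Complex.I * ξ / 2) -
            ∑ i : Fin r, symb (fun k => v k i) ξ *
              symbM (fun k => a (2 * k)) i ℓ ξ) 0 = 0)) := by
  obtain rfl : P = _ := funext hPdef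
  have haS : Function.support a ⊆ ha.toFinset := ha.coe_toFinset.symm.subset
  have hvS : Function.support v ⊆ hv.toFinset := hv.coe_toFinset.symm.subset
  refine ⟨(exists_sd_pconv_monomial_eq_eval_iff haS hvS).trans
    (forall_iteratedDeriv_sum_symb_two_mul_mul_symbM_add_pi_eq_zero_iff haS hvS).symm, ?_⟩
  simp only [iteratedDeriv_sum_symb_two_mul_mul_symbM_add_pi ha hv, neg_eq_zero, mul_eq_zero,
    pow_eq_zero_iff', two_ne_zero, false_and, false_or]
end

section
/- Let c : ℤ → ℂ be a finitely supported sequence with ĉ(0) = 1, where ĉ(ξ) := ∑_{k∈ℤ} c(k)e^{-ikξ}. Then the infinite product φ̂(ξ) := ∏_{j=1}^∞ ĉ(2^{-j}ξ) converges locally uniformly on ℂ to an entire function satisfying φ̂(0) = 1 and the functional equation φ̂(2ξ) = ĉ(ξ) φ̂(ξ) for all ξ. -/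
open Complex

open Filter Metric Finset

/-! Near `0`, `g ξ - 1 = ξ • dslope g 0 ξ` with `dslope g 0` bounded on compacts, so on a
compact set the factors satisfy `‖g (ξ / 2 ^ j) - 1‖ ≤ C 2⁻ʲ`. This summable bound gives uniform
convergence of `∏ (1 + (g (ξ / 2 ^ j) - 1))` on compacts; the limit is entire as a locally uniform
limit of entire functions, and the functional equation comes from splitting off the first factor.
-/

theorem IsCompact.exists_norm_sub_le_mul_norm_sub {𝕜 E : Type*} [NontriviallyNormedField 𝕜]
    [NormedAddCommGroup E] [NormedSpace 𝕜 E] {f : 𝕜 → E} {K : Set 𝕜} {a : 𝕜} (hK : IsCompact K)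
    (hf : Continuous f) (ha : DifferentiableAt 𝕜 f a) :
    ∃ C, ∀ x ∈ K, ‖f x - f a‖ ≤ C * ‖x - a‖ := by
  have hslope : ContinuousOn (dslope f a) K :=
    ((continuousOn_dslope univ_mem).2 ⟨hf.continuousOn, ha⟩).mono (Set.subset_univ K)
  obtain ⟨C, hC⟩ := hK.exists_bound_of_continuousOn hslope
  refine ⟨C, fun x hx => ?_⟩
  rw [← sub_smul_dslope, norm_smul, mul_comm]
  exact mul_le_mul_of_nonneg_right (hC x hx) (norm_nonneg _)

noncomputable def dyadicProd (g : ℂ → ℂ) (ξ : ℂ) : ℂ :=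
  ∏' j : ℕ, g (ξ / 2 ^ (j + 1))

section

variable {g : ℂ → ℂ}

theorem exists_summable_bound_comp_div_two_pow (hg : Continuous g) (hgd : DifferentiableAt ℂ g 0)
    (hg0 : g 0 = 1) {K : Set ℂ} (hK : IsCompact K) :
    ∃ u : ℕ → ℝ, Summable u ∧ ∀ n, ∀ ξ ∈ K, ‖g (ξ / 2 ^ (n + 1)) - 1‖ ≤ u n := by
  obtain ⟨R, hR⟩ := hK.isBounded.subset_closedBall (0 : ℂ)
  obtain ⟨C, hC⟩ := (isCompact_closedBall 0 R).exists_norm_sub_le_mul_norm_sub hg hgd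
  refine ⟨fun n => |C| * R * (1 / 2) ^ (n + 1),
    ((summable_nat_add_iff 1).2 summable_geometric_two).mul_left _, fun n ξ hξ => ?_⟩
  have hξR : ‖ξ‖ ≤ R := by simpa using hR hξ
  have hnorm : ‖ξ / 2 ^ (n + 1)‖ = ‖ξ‖ * (1 / 2) ^ (n + 1) := by
    rw [norm_div, norm_pow, Complex.norm_two, div_eq_mul_one_div, one_div_pow]
  have hmem : ξ / 2 ^ (n + 1) ∈ closedBall (0 : ℂ) R := by
    rw [mem_closedBall_zero_iff, hnorm]
    refine (mul_le_of_le_one_right (norm_nonneg ξ) ?_).trans hξR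
    exact pow_le_one₀ (by norm_num) (by norm_num)
  calc ‖g (ξ / 2 ^ (n + 1)) - 1‖ ≤ C * ‖ξ / 2 ^ (n + 1)‖ := by simpa [hg0] using hC _ hmem
    _ ≤ |C| * R * (1 / 2) ^ (n + 1) := by
      rw [hnorm, ← mul_assoc]
      gcongr
      exact le_abs_self C

theorem hasProdUniformlyOn_dyadicProd (hg : Continuous g) (hgd : DifferentiableAt ℂ g 0)
    (hg0 : g 0 = 1) {K : Set ℂ} (hK : IsCompact K) :
    HasProdUniformlyOn (fun n ξ => g (ξ / 2 ^ (n + 1))) (dyadicProd g) K := by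
  obtain ⟨u, hu, hbound⟩ := exists_summable_bound_comp_div_two_pow hg hgd hg0 hK
  have hcont (n : ℕ) : Continuous fun ξ : ℂ => g (ξ / 2 ^ (n + 1)) - 1 :=
    (hg.comp (continuous_id.div_const _)).sub continuous_const
  have h := hu.hasProdUniformlyOn_nat_one_add hK (Eventually.of_forall hbound)
    fun n => (hcont n).continuousOn
  simp only [add_sub_cancel] at h
  exact h

theorem tendstoLocallyUniformly_dyadicProd (hg : Continuous g) (hgd : DifferentiableAt ℂ g 0)
    (hg0 : g 0 = 1) :
    TendstoLocallyUniformly (fun n ξ => ∏ j ∈ range n, g (ξ / 2 ^ (j + 1))) (dyadicProd g)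
      atTop :=
  tendstoLocallyUniformly_iff_forall_isCompact.2 fun _ hK =>
    (hasProdUniformlyOn_dyadicProd hg hgd hg0 hK).tendstoUniformlyOn_finsetRange

theorem differentiable_dyadicProd (hg : Differentiable ℂ g) (hg0 : g 0 = 1) :
    Differentiable ℂ (dyadicProd g) := by
  have hprod (n : ℕ) : Differentiable ℂ fun ξ => ∏ j ∈ range n, g (ξ / 2 ^ (j + 1)) :=
    Differentiable.fun_finsetProd fun j _ => hg.comp (by fun_prop)
  rw [← differentiableOn_univ]
  exact (tendstoLocallyUniformly_dyadicProd hg.continuous (hg 0) hg0).tendstoLocallyUniformlyOn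
    |>.differentiableOn (Eventually.of_forall fun n => (hprod n).differentiableOn) isOpen_univ

theorem dyadicProd_zero (hg0 : g 0 = 1) : dyadicProd g 0 = 1 := by
  simp [dyadicProd, hg0]

theorem dyadicProd_two_mul (hg : Continuous g) (hgd : DifferentiableAt ℂ g 0) (hg0 : g 0 = 1)
    (ξ : ℂ) :
    dyadicProd g (2 * ξ) = g ξ * dyadicProd g ξ := by
  have hshift : ∀ n : ℕ, 2 * ξ / 2 ^ (n + 1 + 1) = ξ / 2 ^ (n + 1) := fun n => by
    rw [pow_succ, mul_comm (2 ^ (n + 1)) 2, ← div_div, mul_div_cancel_left₀ _ two_ne_zero]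
  have hmul : Multipliable fun n : ℕ => g (2 * ξ / 2 ^ (n + 1 + 1)) := by
    simpa only [hshift] using
      ((hasProdUniformlyOn_dyadicProd hg hgd hg0 isCompact_singleton).hasProd rfl).multipliable
  rw [dyadicProd, tprod_eq_zero_mul' (f := fun n => g (2 * ξ / 2 ^ (n + 1))) hmul]
  simp only [hshift, zero_add, pow_one, mul_div_cancel_left₀ ξ two_ne_zero, dyadicProd]

end

theorem differentiable_symb {c : ℤ → ℂ} (hc : (Function.support c).Finite) :
    Differentiable ℂ (symb c) := by
  have hsum : symb c = fun ξ => ∑ k ∈ hc.toFinset, c k * exp (-I * k * ξ) := funext fun ξ =>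
    finsum_eq_sum_of_support_subset _ <| by
      simp only [Set.Finite.coe_toFinset]
      exact Function.support_mul_subset_left c fun k => exp (-I * k * ξ)
  rw [hsum]
  fun_prop

/-- the infinite product `φ̂(ξ) = ∏_{j≥1} ĉ(2^{-j}ξ)` converges locally
uniformly to an entire function with `φ̂(0) = 1` and `φ̂(2ξ) = ĉ(ξ)φ̂(ξ)`. -/
theorem stmt11 (c : ℤ → ℂ) (hc : (Function.support c).Finite) (hc0 : symb c 0 = 1) :
    ∃ φ : ℂ → ℂ,
      (∀ z : ℂ, AnalyticAt ℂ φ z) ∧ φ 0 = 1 ∧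
      (∀ ξ : ℂ, φ (2 * ξ) = symb c ξ * φ ξ) ∧
      TendstoLocallyUniformly
        (fun n : ℕ => fun ξ : ℂ => ∏ j ∈ Finset.range n, symb c (ξ / 2 ^ (j + 1)))
        φ Filter.atTop := by
  have hdiff := differentiable_symb hc
  exact ⟨dyadicProd (symb c), (differentiable_dyadicProd hdiff hc0).analyticAt,
    dyadicProd_zero hc0, dyadicProd_two_mul hdiff.continuous (hdiff 0) hc0,
    tendstoLocallyUniformly_dyadicProd hdiff.continuous (hdiff 0) hc0⟩
end

section
/- Let r ∈ ℕ and a : ℤ → ℂ^{r×r} be a finitely supported mask. A Hermite subdivision scheme with refinements w_{n+1} := (S_a w_n)·D^{-1} (equivalently w_n := (S_a^n w_0) D^{-n}), with D := diag(1, 2^{-1}, …, 2^{1-r}), satisfies w_{n+1}(2k) = w_n(k) for all k ∈ ℤ, all n ∈ ℕ, and all initial data w_0 : ℤ → ℂ^{1×r}, if and only if a(0) = diag(2^{-1}, 2^{-2}, …, 2^{-r}) and a(2k) = 0 for all k ∈ ℤ \ {0}. -/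
open Complex

/-- Iterated subdivision `S_a^n`. -/
noncomputable def sdIter {r : ℕ} (a : ℤ → Fin r → Fin r → ℂ) :
    ℕ → (ℤ → Fin r → ℂ) → (ℤ → Fin r → ℂ)
  | 0, w => w
  | n + 1, w => sd a (sdIter a n w)

/-- Hermite refinement data `w_n := (S_a^n w_0) D^{-n}` with `D = diag(1,2^{-1},…,2^{1-r})`,
so the `ℓ`-th entry picks up a factor `2^{ℓ n}`. -/
noncomputable def hermiteData {r : ℕ} (a : ℤ → Fin r → Fin r → ℂ) (w₀ : ℤ → Fin r → ℂ)
    (n : ℕ) (k : ℤ) (ℓ : Fin r) : ℂ :=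
  sdIter a n w₀ k ℓ * 2 ^ ((ℓ : ℕ) * n)

/-- the Hermite subdivision scheme is interpolatory, i.e.
`w_{n+1}(2k) = w_n(k)` for all data, iff `a(0) = diag(2^{-1},…,2^{-r})` and `a(2k) = 0`
for all `k ≠ 0`. -/
theorem stmt12 (r : ℕ) (hr : 0 < r) (a : ℤ → Fin r → Fin r → ℂ)
    (ha : (Function.support a).Finite) :
    (∀ w₀ : ℤ → Fin r → ℂ, ∀ n : ℕ, ∀ k : ℤ, ∀ ℓ : Fin r,
        hermiteData a w₀ (n + 1) (2 * k) ℓ = hermiteData a w₀ n k ℓ) ↔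
      ((∀ i j : Fin r, a 0 i j = if i = j then ((2 : ℂ) ^ ((i : ℕ) + 1))⁻¹ else 0) ∧
        ∀ k : ℤ, k ≠ 0 → ∀ i j : Fin r, a (2 * k) i j = 0) := by
  constructor
  · intro H
    have key : ∀ (m₀ : ℤ) (i₀ : Fin r) (k : ℤ) (ℓ : Fin r),
        2 * a (2 * k - 2 * m₀) i₀ ℓ * 2 ^ ((ℓ : ℕ)) =
          if k = m₀ ∧ ℓ = i₀ then 1 else 0 := by
      intro m₀ i₀ k ℓ
      have h := H (fun m i => if m = m₀ ∧ i = i₀ then 1 else 0) 0 k ℓ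
      simp only [hermiteData, sdIter, sd, Nat.mul_zero, Nat.mul_one, pow_zero, mul_one] at h
      rw [show (∑ᶠ k' : ℤ, ∑ i : Fin r,
          (if k' = m₀ ∧ i = i₀ then (1 : ℂ) else 0) * a (2 * k - 2 * k') i ℓ)
          = a (2 * k - 2 * m₀) i₀ ℓ from ?_] at h
      · rw [← h]; ring
      · have : ∀ k' : ℤ, (∑ i : Fin r,
            (if k' = m₀ ∧ i = i₀ then (1 : ℂ) else 0) * a (2 * k - 2 * k') i ℓ)
            = if k' = m₀ then a (2 * k - 2 * k') i₀ ℓ else 0 := by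
          intro k'
          by_cases hk : k' = m₀
          · simp [hk]
          · simp [hk]
        rw [finsum_congr this, finsum_eq_single _ m₀ (fun x hx => if_neg hx), if_pos rfl]
    constructor
    · intro i j
      have h := key 0 i 0 j
      simp only [mul_zero, sub_zero, true_and] at h
      by_cases hij : i = j
      · subst hij
        rw [if_pos rfl] at h
        rw [if_pos rfl]
        have hne : ((2 : ℂ) ^ ((i : ℕ) + 1)) ≠ 0 := pow_ne_zero _ two_ne_zero
        rw [inv_eq_one_div, eq_div_iff hne, pow_succ]
        linear_combination h
      · rw [if_neg (fun hh => hij hh.symm)] at h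
        rw [if_neg hij]
        have hne : (2 : ℂ) * 2 ^ ((j : ℕ)) ≠ 0 :=
          mul_ne_zero two_ne_zero (pow_ne_zero _ two_ne_zero)
        have h' : a 0 i j * (2 * 2 ^ ((j : ℕ))) = 0 := by linear_combination h
        exact (mul_eq_zero.mp h').resolve_right hne
    · intro k hk i j
      have h := key 0 i k j
      simp only [mul_zero, sub_zero, if_neg (by tauto : ¬(k = 0 ∧ j = i))] at h
      have hne : (2 : ℂ) * 2 ^ ((j : ℕ)) ≠ 0 :=
        mul_ne_zero two_ne_zero (pow_ne_zero _ two_ne_zero)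
      have h' : a (2 * k) i j * (2 * 2 ^ ((j : ℕ))) = 0 := by linear_combination h
      exact (mul_eq_zero.mp h').resolve_right hne
  · rintro ⟨h0, h2⟩ w₀ n k ℓ
    have hsd : ∀ w : ℤ → Fin r → ℂ,
        sd a w (2 * k) ℓ = 2 * (w k ℓ * ((2 : ℂ) ^ ((ℓ : ℕ) + 1))⁻¹) := by
      intro w
      have inner : ∀ m : ℤ, (∑ i : Fin r, w m i * a (2 * k - 2 * m) i ℓ)
          = if m = k then w k ℓ * ((2 : ℂ) ^ ((ℓ : ℕ) + 1))⁻¹ else 0 := by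
        intro m
        by_cases hm : m = k
        · rw [if_pos hm, hm]
          rw [Finset.sum_eq_single ℓ]
          · rw [show 2 * k - 2 * k = (0:ℤ) from by ring, h0 ℓ ℓ, if_pos rfl]
          · intro i _ hi
            rw [show 2 * k - 2 * k = (0:ℤ) from by ring, h0 i ℓ, if_neg hi, mul_zero]
          · intro habs; exact absurd (Finset.mem_univ ℓ) habs
        · rw [if_neg hm]
          apply Finset.sum_eq_zero
          intro i _
          rw [show 2 * k - 2 * m = 2 * (k - m) from by ring,
            h2 (k - m) (fun hkm => hm (by omega)) i ℓ, mul_zero]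
      unfold sd
      rw [finsum_congr inner, finsum_eq_single _ k (fun x hx => if_neg hx), if_pos rfl]
    show hermiteData a w₀ (n + 1) (2 * k) ℓ = hermiteData a w₀ n k ℓ
    simp only [hermiteData, sdIter, hsd]
    have hne : ((2 : ℂ) ^ ((ℓ : ℕ) + 1)) ≠ 0 := pow_ne_zero _ two_ne_zero
    rw [Nat.mul_succ, pow_add, pow_succ]
    field_simp
    ring
end

section
/- Let ψ : ℝ → ℂ be a compactly supported continuous function and u : ℤ → ℂ an absolutely summable sequence of the form u(k) = δ(k) + c(k) − c(k−1) for some c ∈ ℓ^1(ℤ) (equivalently û(ξ) = 1 + (1−e^{-iξ})ĉ(ξ)). Then lim_{n→∞} ‖∑_{k∈ℤ} ψ(2^{-n}(·−k)) u(k) − ψ(2^{-n}·)‖_∞ = 0, where ‖·‖_∞ is the supremum norm on ℝ. -/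
/-!
For fixed `n` and `x`, `f k = ψ (2^{-n} (x - k))` is a bounded sequence. Summation by parts
against `u = δ + c - c(· - 1)` turns `∑ f k u k - f 0` into `∑ (f k - f (k + 1)) c k`, and
consecutive values of `f` are values of `ψ` at points `2^{-n}` apart. Hence the error is at most
the modulus of continuity of `ψ` at `2^{-n}` times `‖c‖₁`, uniformly in `x`.
-/

open Filter Topology

section SummationByParts

variable {R : Type*} [NormedRing R] [CompleteSpace R]

theorem summable_mul_of_norm_le {f c : ℤ → R} {M : ℝ} (hf : ∀ k, ‖f k‖ ≤ M)
    (hc : Summable fun k => ‖c k‖) : Summable fun k => f k * c k :=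
  Summable.of_norm_bounded (hc.mul_left M) fun k =>
    (norm_mul_le _ _).trans (mul_le_mul_of_nonneg_right (hf k) (norm_nonneg _))

theorem tsum_mul_delta_add_sub_shift {f c u : ℤ → R} {M : ℝ} (hf : ∀ k, ‖f k‖ ≤ M)
    (hc : Summable fun k => ‖c k‖)
    (hu : ∀ k, u k = (if k = 0 then 1 else 0) + c k - c (k - 1)) :
    ∑' k, f k * u k = f 0 + ∑' k, (f k - f (k + 1)) * c k := by
  have hfc : Summable fun k => f k * c k := summable_mul_of_norm_le hf hc
  have hfc' : Summable fun k => f (k + 1) * c k :=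
    summable_mul_of_norm_le (fun k => hf (k + 1)) hc
  have hshift : HasSum (fun k => f k * c (k - 1)) (∑' k, f (k + 1) * c k) := by
    rw [← (Equiv.addRight (1 : ℤ)).hasSum_iff]
    simpa [Function.comp_def] using hfc'.hasSum
  have hdelta : HasSum (fun k => f k * if k = 0 then 1 else 0) (f 0) := by
    simpa using
      hasSum_single (f := fun k => f k * if k = 0 then 1 else 0) 0 fun k hk => by simp [hk]
  calc ∑' k, f k * u k
      = ∑' k, ((f k * if k = 0 then 1 else 0) + f k * c k - f k * c (k - 1)) := by
        simp only [hu, mul_add, mul_sub]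
    _ = f 0 + (∑' k, f k * c k - ∑' k, f (k + 1) * c k) := by
        rw [((hdelta.add hfc.hasSum).sub hshift).tsum_eq, add_sub_assoc]
    _ = f 0 + ∑' k, (f k - f (k + 1)) * c k := by
        rw [← hfc.tsum_sub hfc']
        simp only [sub_mul]

end SummationByParts

theorem norm_tsum_mul_le_of_norm_le {R : Type*} [NormedRing R] {g c : ℤ → R} {η : ℝ}
    (hg : ∀ k, ‖g k‖ ≤ η) (hc : Summable fun k => ‖c k‖) :
    ‖∑' k, g k * c k‖ ≤ η * ∑' k, ‖c k‖ :=
  tsum_of_norm_bounded (hc.hasSum.mul_left η) fun k =>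
    (norm_mul_le _ _).trans (mul_le_mul_of_nonneg_right (hg k) (norm_nonneg _))

theorem UniformContinuous.eventually_forall_dist_add_lt {α : Type*} [PseudoMetricSpace α]
    {ψ : ℝ → α} (hψ : UniformContinuous ψ) {h : ℕ → ℝ} (hh : Tendsto h atTop (𝓝 0))
    {ε : ℝ} (hε : 0 < ε) : ∀ᶠ n in atTop, ∀ a, dist (ψ (a + h n)) (ψ a) < ε := by
  obtain ⟨δ, hδ, hψδ⟩ := Metric.uniformContinuous_iff.mp hψ ε hε
  filter_upwards [hh (Metric.ball_mem_nhds 0 hδ)] with n hn a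
  exact hψδ (by simpa [Real.dist_eq] using hn)

theorem tendsto_two_zpow_neg_atTop : Tendsto (fun n : ℕ => (2 : ℝ) ^ (-(n : ℤ))) atTop (𝓝 0) := by
  simp only [zpow_neg, zpow_natCast]
  exact tendsto_inv_atTop_zero.comp (tendsto_pow_atTop_atTop_of_one_lt one_lt_two)

/-- if `u = δ + ∇c` with `c ∈ ℓ¹(ℤ)` and `ψ` is compactly supported and
continuous, then `‖ψ(2^{-n}·)*u − ψ(2^{-n}·)‖_∞ → 0`. -/
theorem stmt14 (ψ : ℝ → ℂ) (hψc : Continuous ψ) (hψs : HasCompactSupport ψ)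
    (u c : ℤ → ℂ) (hc : Summable fun k : ℤ => ‖c k‖)
    (huc : ∀ k : ℤ, u k = (if k = 0 then 1 else 0) + c k - c (k - 1)) :
    ∀ ε : ℝ, 0 < ε → ∃ N : ℕ, ∀ n ≥ N, ∀ x : ℝ,
      ‖(∑' k : ℤ, ψ ((2 : ℝ) ^ (-(n : ℤ)) * (x - (k : ℤ))) * u k) -
        ψ ((2 : ℝ) ^ (-(n : ℤ)) * x)‖ < ε := by
  intro ε hε
  obtain ⟨M, hM⟩ := hψs.exists_bound_of_continuous hψc
  set C := ∑' k, ‖c k‖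
  have hC : 0 ≤ C := tsum_nonneg fun k => norm_nonneg _
  have hη : 0 < ε / (C + 1) := by positivity
  obtain ⟨N, hN⟩ := eventually_atTop.mp <| (hψs.uniformContinuous_of_continuous hψc)
    |>.eventually_forall_dist_add_lt tendsto_two_zpow_neg_atTop hη
  refine ⟨N, fun n hn x => ?_⟩
  have hψr := hN n hn
  set r : ℝ := 2 ^ (-(n : ℤ))
  have hconsecutive : ∀ k : ℤ, ‖ψ (r * (x - k)) - ψ (r * (x - (k + 1 : ℤ)))‖ ≤ ε / (C + 1) := by
    intro k
    have hstep : r * (x - (k + 1 : ℤ)) + r = r * (x - k) := by push_cast; ring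
    simpa only [hstep, dist_eq_norm] using (hψr (r * (x - (k + 1 : ℤ)))).le
  rw [tsum_mul_delta_add_sub_shift (f := fun k : ℤ => ψ (r * (x - k))) (fun k => hM _) hc huc]
  calc ‖ψ (r * (x - (0 : ℤ))) + ∑' k : ℤ, (ψ (r * (x - k)) - ψ (r * (x - (k + 1 : ℤ)))) * c k
        - ψ (r * x)‖
      = ‖∑' k : ℤ, (ψ (r * (x - k)) - ψ (r * (x - (k + 1 : ℤ)))) * c k‖ := by
        rw [Int.cast_zero, sub_zero, add_sub_cancel_left]
    _ ≤ ε / (C + 1) * C := norm_tsum_mul_le_of_norm_le hconsecutive hc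
    _ < ε := by
        rw [div_mul_eq_mul_div, div_lt_iff₀ (by positivity)]
        exact mul_lt_mul_of_pos_left (lt_add_one C) hε
end
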